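/- Let 1/2 < δ < 1, set ρ := 2 - 1/δ, and let 1/2 < α < 1 and c > 0. Let k, N : ℕ → ℕ satisfy k(d) < d < N(d), d/N(d) → δ, k(d)/d → ρ, and N(d) - 2d + k(d) ≥ c·d^α for all sufficiently large d. Then Q_{d,k(d)}(N(d)) → 0 as d → ∞. -/

import Mathlib

open Filter Finset Real Topology

/-- `Q d k N = 2^k · (Σ_{i=0}^{d-k-1} C(N-k-1, i)) / (Σ_{i=0}^{d-1} C(N-1, i))`,
the normalized expected `k`-face number `E f_k(C_N)/C(N,k)` of the Cover–Efron cone. -/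
noncomputable def Q (d k N : ℕ) : ℝ :=
  2 ^ k * (∑ i ∈ Finset.range (d - k), ((N - k - 1).choose i : ℝ)) /
    (∑ i ∈ Finset.range d, ((N - 1).choose i : ℝ))

/-- Monotonicity of binomial coefficients below the middle. -/
lemma aux_mono {m i j : ℕ} (hij : i ≤ j) (hjm : 2 * j ≤ m) :
    m.choose i ≤ m.choose j := by
  induction hij using Nat.decreasingInduction with
  | self => exact le_refl _
  | of_succ p hp ih =>
      exact le_trans (Nat.choose_le_succ_of_lt_half_left (by omega)) ih

lemma aux_step {m a b : ℕ} (hb : b < a) (ha : a ≤ m) :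
    m.choose b * (m - a + 1) ≤ m.choose (b + 1) * a :=
  calc m.choose b * (m - a + 1) ≤ m.choose b * (m - b) :=
        Nat.mul_le_mul_left _ (by omega)
    _ = m.choose (b + 1) * (b + 1) := (Nat.choose_succ_right_eq m b).symm
    _ ≤ m.choose (b + 1) * a := Nat.mul_le_mul_left _ hb

lemma aux_iter (m a : ℕ) (ha : a ≤ m) :
    ∀ u, u ≤ a → m.choose (a - u) * (m - a + 1) ^ u ≤ m.choose a * a ^ u := by
  intro u
  induction u with
  | zero => simp
  | succ u ih =>
      intro hu
      have h1 : a - (u + 1) < a := by omega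
      calc m.choose (a - (u + 1)) * (m - a + 1) ^ (u + 1)
          = (m.choose (a - (u + 1)) * (m - a + 1)) * (m - a + 1) ^ u := by ring
        _ ≤ (m.choose (a - (u + 1) + 1) * a) * (m - a + 1) ^ u :=
            Nat.mul_le_mul_right _ (aux_step h1 ha)
        _ = a * (m.choose (a - u) * (m - a + 1) ^ u) := by
            rw [show a - (u + 1) + 1 = a - u by omega]; ring
        _ ≤ a * (m.choose a * a ^ u) := Nat.mul_le_mul_left _ (ih (by omega))
        _ = m.choose a * a ^ (u + 1) := by ring

/-- The lower half of the binomial row sums to at least half of `2^(N-1)`. -/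
lemma aux_half {N d : ℕ} (hd1 : 1 ≤ d) (hd : d ≤ N) (h2d : N ≤ 2 * d) :
    2 ^ (N - 1) ≤ 2 * ∑ i ∈ Finset.range d, (N - 1).choose i := by
  obtain ⟨n, rfl⟩ : ∃ n, N = n + 1 := ⟨N - 1, by omega⟩
  simp only [Nat.add_sub_cancel]
  have hsplit : (∑ i ∈ Finset.range d, n.choose i) + ∑ i ∈ Finset.Ico d (n + 1), n.choose i
      = ∑ i ∈ Finset.range (n + 1), n.choose i := by
    rw [Finset.range_eq_Ico, Finset.range_eq_Ico]
    exact Finset.sum_Ico_consecutive (fun i => n.choose i) (by omega : 0 ≤ d) (by omega : d ≤ n + 1)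
  have hIco : ∑ i ∈ Finset.Ico d (n + 1), n.choose i ≤ ∑ i ∈ Finset.range d, n.choose i := by
    rw [Finset.sum_Ico_eq_sum_range]
    calc ∑ i ∈ Finset.range (n + 1 - d), n.choose (d + i)
        = ∑ i ∈ Finset.range (n + 1 - d), n.choose (n - d - i) := by
          refine Finset.sum_congr rfl fun i hi => ?_
          rw [Finset.mem_range] at hi
          rw [show n - d - i = n - (d + i) by omega, Nat.choose_symm (by omega)]
      _ = ∑ i ∈ Finset.range (n + 1 - d), n.choose i := by
          have h := Finset.sum_range_reflect (fun j => n.choose j) (n + 1 - d)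
          calc ∑ i ∈ Finset.range (n + 1 - d), n.choose (n - d - i)
              = ∑ i ∈ Finset.range (n + 1 - d), n.choose (n + 1 - d - 1 - i) := by
                refine Finset.sum_congr rfl fun i hi => ?_
                rw [Finset.mem_range] at hi
                congr 1
                omega
            _ = _ := h
      _ ≤ ∑ i ∈ Finset.range d, n.choose i :=
          Finset.sum_le_sum_of_subset (Finset.range_subset_range.2 (by omega))
  have htot := Nat.sum_range_choose n
  omega

/-- `x * exp (-(b * x ^ ε)) → 0` for `b, ε > 0`. -/
lemma aux_tendsto (b ε : ℝ) (hb : 0 < b) (hε : 0 < ε) :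
    Tendsto (fun x : ℝ => x * Real.exp (-(b * x ^ ε))) atTop (𝓝 0) := by
  have h1 : Tendsto (fun y : ℝ => y ^ (1 / ε) * Real.exp (-b * y)) atTop (𝓝 0) :=
    tendsto_rpow_mul_exp_neg_mul_atTop_nhds_zero (1 / ε) b hb
  have h2 : Tendsto (fun x : ℝ => x ^ ε) atTop atTop := tendsto_rpow_atTop hε
  refine (h1.comp h2).congr' ?_
  filter_upwards [eventually_ge_atTop (0 : ℝ)] with x hx
  simp only [Function.comp_apply]
  rw [← Real.rpow_mul hx, mul_one_div, div_self hε.ne', Real.rpow_one, neg_mul]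

/-- Ratio bound: `a/(m-a+1) ≤ exp(-T/(4m))` in the relevant regime. -/
lemma aux_ratio (M A Tr U J : ℝ) (hM : M = 2 * J + Tr + 1) (hA : A = J + U)
    (h4u : 4 * U ≤ Tr) (hT8 : 8 ≤ Tr) (hJ : 0 ≤ J) (hU : 0 ≤ U) :
    A / (M - A + 1) ≤ Real.exp (-(Tr / (4 * M))) := by
  have hTr0 : (0 : ℝ) ≤ Tr := by linarith
  have hMpos : (0 : ℝ) < M := by linarith
  have hden : (0 : ℝ) < M - A + 1 := by nlinarith
  have h1 : A / (M - A + 1) ≤ (4 * M - Tr) / (4 * M) := by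
    rw [div_le_div_iff₀ hden (by linarith)]
    nlinarith [mul_nonneg hJ (sub_nonneg.2 h4u), mul_nonneg hTr0 (sub_nonneg.2 h4u),
      mul_nonneg hJ hTr0, sq_nonneg Tr, mul_nonneg hJ hU]
  have h2 : (4 * M - Tr) / (4 * M) = 1 - Tr / (4 * M) := by field_simp
  have h3 := Real.add_one_le_exp (-(Tr / (4 * M)))
  calc A / (M - A + 1) ≤ (4 * M - Tr) / (4 * M) := h1
    _ = 1 - Tr / (4 * M) := h2
    _ ≤ Real.exp (-(Tr / (4 * M))) := by linarith

lemma aux_exparith (M Tr U : ℝ) (hM : 0 < M) (hTr0 : 0 ≤ Tr) (h8u : Tr ≤ 8 * U) :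
    Tr ^ 2 / (32 * M) ≤ U * (Tr / (4 * M)) := by
  have e : Tr ^ 2 ≤ 8 * U * Tr := by nlinarith
  have hU0 : 0 ≤ U := by nlinarith
  calc Tr ^ 2 / (32 * M) ≤ (8 * U * Tr) / (32 * M) :=
        div_le_div₀ (by positivity) e (by linarith) le_rfl
    _ = U * (Tr / (4 * M)) := by field_simp; ring

set_option maxHeartbeats 1600000 in
theorem Q_tendsto_zero_supercritical (δ ρ c α : ℝ) (hδ : 1 / 2 < δ) (hδ1 : δ < 1)
    (hρ : ρ = 2 - 1 / δ) (hα1 : 1 / 2 < α) (hα2 : α < 1) (hc : 0 < c)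
    (k N : ℕ → ℕ) (hkN : ∀ᶠ d in atTop, k d < d ∧ d < N d)
    (h1 : Tendsto (fun d : ℕ => (d : ℝ) / (N d : ℝ)) atTop (𝓝 δ))
    (h2 : Tendsto (fun d : ℕ => (k d : ℝ) / (d : ℝ)) atTop (𝓝 ρ))
    (h3 : ∀ᶠ d : ℕ in atTop, c * (d : ℝ) ^ α ≤ (N d : ℝ) - 2 * d + k d) :
    Tendsto (fun d : ℕ => Q d (k d) (N d)) atTop (𝓝 0) := by
  have hδ0 : (0 : ℝ) < δ := by linarith
  have hρ0 : (0 : ℝ) < ρ := by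
    rw [hρ]
    have : 1 / δ < 2 := by rw [div_lt_iff₀ hδ0]; linarith
    linarith
  set b : ℝ := c ^ 2 / 64 with hb_def
  set ε : ℝ := 2 * α - 1 with hε_def
  have hbpos : 0 < b := by positivity
  have hεpos : 0 < ε := by simp only [hε_def]; linarith
  -- limit facts
  have hNd : Tendsto (fun d : ℕ => (N d : ℝ) / d) atTop (𝓝 δ⁻¹) := by
    have := h1.inv₀ hδ0.ne'
    simpa [inv_div] using this
  have hTlim : Tendsto (fun d : ℕ => ((N d : ℝ) - 2 * d + k d) / d) atTop (𝓝 0) := by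
    have h := (hNd.add h2).sub_const 2
    have hlim : δ⁻¹ + ρ - 2 = 0 := by rw [hρ, inv_eq_one_div]; ring
    rw [hlim] at h
    refine h.congr' ?_
    filter_upwards [eventually_ge_atTop 1] with d hd
    have hd0 : (0 : ℝ) < d := by exact_mod_cast hd
    field_simp
    ring
  have hcd : Tendsto (fun d : ℕ => c * (d : ℝ) ^ α) atTop atTop := by
    apply Tendsto.const_mul_atTop hc
    exact (tendsto_rpow_atTop (by linarith : (0:ℝ) < α)).comp tendsto_natCast_atTop_atTop
  -- the dominating function
  have hg : Tendsto (fun d : ℕ => 2 * (d : ℝ) * Real.exp (-(b * (d : ℝ) ^ ε))) atTop (𝓝 0) := by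
    have := (aux_tendsto b ε hbpos hεpos).comp tendsto_natCast_atTop_atTop
    have h2' := this.const_mul (2 : ℝ)
    simpa [Function.comp, mul_assoc] using h2'
  refine squeeze_zero' (Eventually.of_forall fun d => by unfold Q; positivity) ?_ hg
  filter_upwards [hkN, h3, hTlim.eventually_lt_const (by linarith : (0:ℝ) < ρ / 2),
    h2.eventually_const_lt (by linarith : 3 * ρ / 4 < ρ), hcd.eventually_ge_atTop 8,
    eventually_ge_atTop 1] with d hkNd h3d hE3 hE4 hE5 hd1
  obtain ⟨hkd, hdN⟩ := hkNd
  set K := k d with hK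
  set Nd := N d with hNd_def
  have hd0 : (0 : ℝ) < d := by exact_mod_cast hd1
  have hX0 : (0 : ℝ) < (d : ℝ) ^ α := by positivity
  -- N + k - 2d ≥ c d^α ≥ 8
  have hTr8 : (8 : ℝ) ≤ (Nd : ℝ) - 2 * d + K := le_trans hE5 h3d
  have h2dNK : 2 * d < Nd + K := by
    have : (2 * d : ℝ) < (Nd : ℝ) + K := by push_cast; linarith
    exact_mod_cast this
  -- N < 2d
  have hN2d : Nd < 2 * d := by
    have e3 : ((Nd : ℝ) - 2 * d + K) < ρ / 2 * d := by
      rw [div_lt_iff₀ hd0] at hE3; linarith [hE3]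
    have e4 : 3 * ρ / 4 * d < (K : ℝ) := by
      rw [lt_div_iff₀ hd0] at hE4; linarith [hE4]
    have : (Nd : ℝ) < 2 * d := by linarith [mul_nonneg hρ0.le hd0.le]
    exact_mod_cast this
  set T := Nd + K - 2 * d with hT_def
  set m := Nd - K - 1 with hm_def
  set j := d - K - 1 with hj_def
  set u := T / 4 with hu_def
  set a := j + u with ha_def
  set S1 : ℝ := ∑ i ∈ Finset.range (d - K), (m.choose i : ℝ) with hS1_def
  set S2 : ℝ := ∑ i ∈ Finset.range d, ((Nd - 1).choose i : ℝ) with hS2_def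
  have hQ : Q d K Nd = 2 ^ K * S1 / S2 := rfl
  clear_value S1 S2
  clear_value K Nd T m j u a
  have hTr : (T : ℝ) = (Nd : ℝ) - 2 * d + K := by
    rw [hT_def]; push_cast [h2dNK.le]; ring
  have hT8 : 8 ≤ T := by
    have : (8 : ℝ) ≤ (T : ℝ) := by rw [hTr]; exact hTr8
    exact_mod_cast this
  have hm_eq : m = 2 * j + T + 1 := by omega
  have ham : a ≤ m := by omega
  have hua : u ≤ a := by omega
  have h4u : 4 * u ≤ T := by omega
  have h8u : T ≤ 8 * u := by omega
  have hmd : m + 1 ≤ 2 * d := by omega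
  have hm1 : 1 ≤ m := by omega
  have h2jm : 2 * j ≤ m := by omega
  -- nat inequalities
  have hchoose2 : m.choose a ≤ 2 ^ m := by
    calc m.choose a ≤ ∑ i ∈ Finset.range (m + 1), m.choose i :=
          Finset.single_le_sum (fun i _ => Nat.zero_le _) (Finset.mem_range.2 (by omega))
      _ = 2 ^ m := Nat.sum_range_choose m
  have hiter : m.choose j * (m - a + 1) ^ u ≤ m.choose a * a ^ u := by
    have h := aux_iter m a ham u hua
    rwa [show a - u = j by omega] at h
  have hS1nat : ∑ i ∈ Finset.range (d - K), m.choose i ≤ (d - K) * m.choose j := by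
    have h := Finset.sum_le_card_nsmul (Finset.range (d - K)) (fun i => m.choose i)
      (m.choose j) (fun i hi => aux_mono (by rw [Finset.mem_range] at hi; omega) h2jm)
    simpa [Finset.card_range, smul_eq_mul] using h
  have hhalf := aux_half (by omega : 1 ≤ d) (by omega : d ≤ Nd) hN2d.le
  -- move to ℝ
  have hS2 : (2 : ℝ) ^ (Nd - 1) ≤ 2 * S2 := by rw [hS2_def]; exact_mod_cast hhalf
  have hS2pos : 0 < S2 := by
    have : (0 : ℝ) < (2 : ℝ) ^ (Nd - 1) := by positivity
    linarith
  have r1 : S1 ≤ ((d - K : ℕ) : ℝ) * (m.choose j : ℝ) := by rw [hS1_def]; exact_mod_cast hS1nat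
  -- real cast quantities
  have hMA : ((m - a + 1 : ℕ) : ℝ) = (m : ℝ) - a + 1 := by push_cast [Nat.cast_sub ham]; ring
  have hden : (0 : ℝ) < (m : ℝ) - a + 1 := by
    rw [← hMA]; positivity
  have r2 : (m.choose j : ℝ) ≤ 2 ^ m * ((a : ℝ) / ((m : ℝ) - a + 1)) ^ u := by
    have h := hiter
    have hcast : (m.choose j : ℝ) * ((m : ℝ) - a + 1) ^ u ≤ (2 : ℝ) ^ m * (a : ℝ) ^ u := by
      calc (m.choose j : ℝ) * ((m : ℝ) - a + 1) ^ u
          = ((m.choose j * (m - a + 1) ^ u : ℕ) : ℝ) := by push_cast [Nat.cast_sub ham]; ring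
        _ ≤ ((m.choose a * a ^ u : ℕ) : ℝ) := by exact_mod_cast hiter
        _ ≤ (2 : ℝ) ^ m * (a : ℝ) ^ u := by
            push_cast
            exact mul_le_mul_of_nonneg_right (by exact_mod_cast hchoose2) (by positivity)
    rw [div_pow, ← mul_div_assoc, le_div_iff₀ (pow_pos hden u)]
    exact hcast
  -- casts for the ratio bound
  have hmR : (m : ℝ) = 2 * (j : ℝ) + T + 1 := by exact_mod_cast hm_eq
  have haR : (a : ℝ) = (j : ℝ) + u := by exact_mod_cast ha_def
  have h4uR : 4 * (u : ℝ) ≤ T := by exact_mod_cast h4u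
  have h8uR : (T : ℝ) ≤ 8 * u := by exact_mod_cast h8u
  have hT8R : (8 : ℝ) ≤ T := by exact_mod_cast hT8
  have hmRpos : (1 : ℝ) ≤ m := by exact_mod_cast hm1
  have hj0 : (0 : ℝ) ≤ j := Nat.cast_nonneg j
  have hu0 : (0 : ℝ) ≤ u := Nat.cast_nonneg u
  have r3 : (a : ℝ) / ((m : ℝ) - a + 1) ≤ Real.exp (-((T : ℝ) / (4 * m))) :=
    aux_ratio _ _ _ _ _ hmR haR h4uR hT8R hj0 hu0
  have r4 : ((a : ℝ) / ((m : ℝ) - a + 1)) ^ u ≤ Real.exp (-((T : ℝ) ^ 2 / (32 * m))) := by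
    have hq0 : 0 ≤ (a : ℝ) / ((m : ℝ) - a + 1) := by positivity
    calc ((a : ℝ) / ((m : ℝ) - a + 1)) ^ u ≤ Real.exp (-((T : ℝ) / (4 * m))) ^ u :=
          pow_le_pow_left₀ hq0 r3 u
      _ = Real.exp ((u : ℝ) * -((T : ℝ) / (4 * m))) := (Real.exp_nat_mul _ u).symm
      _ = Real.exp (-((u : ℝ) * ((T : ℝ) / (4 * m)))) := by rw [mul_neg]
      _ ≤ Real.exp (-((T : ℝ) ^ 2 / (32 * m))) := by
          apply Real.exp_le_exp.2
          apply neg_le_neg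
          exact aux_exparith (m : ℝ) (T : ℝ) (u : ℝ) (by linarith) (by linarith) h8uR
  have r6 : b * (d : ℝ) ^ ε ≤ (T : ℝ) ^ 2 / (32 * m) := by
    have hrp : (d : ℝ) ^ ε = ((d : ℝ) ^ α) ^ 2 / d := by
      rw [hε_def, show (2 : ℝ) * α - 1 = α * 2 - 1 by ring, Real.rpow_sub hd0, Real.rpow_one,
        Real.rpow_mul hd0.le]
      norm_num
    have hTr0 : (0 : ℝ) < (T : ℝ) := by linarith
    have e1 : c ^ 2 * ((d : ℝ) ^ α) ^ 2 ≤ (T : ℝ) ^ 2 := by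
      have h : c * (d : ℝ) ^ α ≤ (T : ℝ) := by rw [hTr]; exact h3d
      calc c ^ 2 * ((d : ℝ) ^ α) ^ 2 = (c * (d : ℝ) ^ α) ^ 2 := by ring
        _ ≤ (T : ℝ) ^ 2 := pow_le_pow_left₀ (by positivity) h 2
    have hmd' : (32 : ℝ) * m ≤ 64 * d := by
      have : ((m : ℕ) : ℝ) + 1 ≤ 2 * d := by exact_mod_cast hmd
      linarith
    calc b * (d : ℝ) ^ ε = c ^ 2 * ((d : ℝ) ^ α) ^ 2 / (64 * d) := by
          rw [hrp, hb_def]; field_simp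
      _ ≤ (T : ℝ) ^ 2 / (32 * m) :=
          div_le_div₀ (by positivity) e1 (by linarith) hmd'
  -- assemble
  have hkm : K + m = Nd - 1 := by omega
  have hpow : (2 : ℝ) ^ K * 2 ^ m = 2 ^ (Nd - 1) := by rw [← pow_add, hkm]
  have hdk : ((d - K : ℕ) : ℝ) ≤ d := by exact_mod_cast Nat.sub_le d K
  have hdk0 : (0 : ℝ) ≤ ((d - K : ℕ) : ℝ) := Nat.cast_nonneg _
  calc Q d K Nd = 2 ^ K * S1 / S2 := hQ
    _ ≤ 2 ^ K * (((d - K : ℕ) : ℝ) * (m.choose j : ℝ)) / (2 ^ (Nd - 1) / 2) := by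
        apply div_le_div₀ (by positivity) ?_ (by positivity) (by linarith)
        have h2K : (0 : ℝ) ≤ 2 ^ K := by positivity
        exact mul_le_mul_of_nonneg_left r1 h2K
    _ = 2 * ((d - K : ℕ) : ℝ) * ((m.choose j : ℝ) / 2 ^ m) := by
        rw [← hpow]; field_simp
    _ ≤ 2 * ((d - K : ℕ) : ℝ) * Real.exp (-(b * (d : ℝ) ^ ε)) := by
        apply mul_le_mul_of_nonneg_left ?_ (by positivity)
        rw [div_le_iff₀ (by positivity : (0:ℝ) < 2 ^ m)]
        calc (m.choose j : ℝ) ≤ 2 ^ m * ((a : ℝ) / ((m : ℝ) - a + 1)) ^ u := r2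
          _ ≤ 2 ^ m * Real.exp (-((T : ℝ) ^ 2 / (32 * m))) :=
              mul_le_mul_of_nonneg_left r4 (by positivity)
          _ ≤ 2 ^ m * Real.exp (-(b * (d : ℝ) ^ ε)) := by
              apply mul_le_mul_of_nonneg_left ?_ (by positivity)
              exact Real.exp_le_exp.2 (by linarith)
          _ = Real.exp (-(b * (d : ℝ) ^ ε)) * 2 ^ m := by ring
    _ ≤ 2 * (d : ℝ) * Real.exp (-(b * (d : ℝ) ^ ε)) := by
        apply mul_le_mul_of_nonneg_right ?_ (Real.exp_nonneg _)
        linarith
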